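/- The subgroup of SL(3,ℤ) consisting of all g satisfying gᵀ·B₁·g = B₁, gᵀ·B₂·g = B₂, and gᵀ·B₃·g = B₃, where B₁ = A(1,1,0) = [[2,0,1],[0,2,1],[1,1,2]], B₂ = [[4,−1,1],[−1,4,2],[1,2,4]] (which is 2·A(1,1/2,−1/2)) and B₃ = [[6,−2,2],[−2,6,2],[2,2,6]] (which is 3·A(2/3,2/3,−2/3)), is isomorphic to the Klein four group C₂ × C₂ (it has order 4). -/

import Mathlib

open Matrix

/-- `SL(3, ℤ)`, the group of 3 × 3 integer matrices of determinant one. -/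
abbrev SL3 := Matrix.SpecialLinearGroup (Fin 3) ℤ

/-- The stabilizer in `SL(3, ℤ)` of an integer matrix `B` under the congruence action
`A · g = gᵀ A g`. -/
def congrStab (B : Matrix (Fin 3) (Fin 3) ℤ) : Subgroup SL3 where
  carrier := {g | (g : Matrix (Fin 3) (Fin 3) ℤ)ᵀ * B * (g : Matrix (Fin 3) (Fin 3) ℤ) = B}
  one_mem' := by simp
  mul_mem' := by
    intro a b ha hb
    simp only [Set.mem_setOf_eq] at *
    calc ((a * b : SL3) : Matrix (Fin 3) (Fin 3) ℤ)ᵀ * B * ((a * b : SL3) : Matrix (Fin 3) (Fin 3) ℤ)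
        = (b : Matrix (Fin 3) (Fin 3) ℤ)ᵀ * ((a : Matrix (Fin 3) (Fin 3) ℤ)ᵀ * B * a) * b := by
          simp [Matrix.transpose_mul, Matrix.mul_assoc]
      _ = B := by rw [ha, hb]
  inv_mem' := by
    intro g hg
    simp only [Set.mem_setOf_eq] at *
    have hc : (g : Matrix (Fin 3) (Fin 3) ℤ) * ((g⁻¹ : SL3) : Matrix (Fin 3) (Fin 3) ℤ) = 1 := by
      rw [← Matrix.SpecialLinearGroup.coe_mul, mul_inv_cancel, Matrix.SpecialLinearGroup.coe_one]
    calc ((g⁻¹ : SL3) : Matrix (Fin 3) (Fin 3) ℤ)ᵀ * B * ((g⁻¹ : SL3) : Matrix (Fin 3) (Fin 3) ℤ)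
        = ((g⁻¹ : SL3) : Matrix (Fin 3) (Fin 3) ℤ)ᵀ *
            ((g : Matrix (Fin 3) (Fin 3) ℤ)ᵀ * B * g) *
            ((g⁻¹ : SL3) : Matrix (Fin 3) (Fin 3) ℤ) := by rw [hg]
      _ = ((g : Matrix (Fin 3) (Fin 3) ℤ) * ((g⁻¹ : SL3) : Matrix (Fin 3) (Fin 3) ℤ))ᵀ * B *
            ((g : Matrix (Fin 3) (Fin 3) ℤ) * ((g⁻¹ : SL3) : Matrix (Fin 3) (Fin 3) ℤ)) := by
          simp [Matrix.transpose_mul, Matrix.mul_assoc]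
      _ = B := by rw [hc]; simp

/-- The matrix `A(1,1,0)` representing the vertex `M′` of Soulé's fundamental domain. -/
def B₁ : Matrix (Fin 3) (Fin 3) ℤ := !![2, 0, 1; 0, 2, 1; 1, 1, 2]

/-- The matrix `2·A(1,1/2,-1/2)` representing the vertex `N′` of Soulé's fundamental domain. -/
def B₂ : Matrix (Fin 3) (Fin 3) ℤ := !![4, -1, 1; -1, 4, 2; 1, 2, 4]

/-- The matrix `3·A(2/3,2/3,-2/3)` representing the vertex `P` of Soulé's fundamental domain. -/
def B₃ : Matrix (Fin 3) (Fin 3) ℤ := !![6, -2, 2; -2, 6, 2; 2, 2, 6]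

/-! A column `v` of `g` in the stabilizer satisfies `vᵀ Bₖ v = (Bₖ)ⱼⱼ = 2k` for `k = 1, 2, 3`.
Since `vᵀ B₁ v = a² + b² + (a + c)² + (b + c)²` for `v = (a, b, c)`, this bounds `v`, and the three
equations leave the eight vectors `±e₁, ±e₂, ±e₃, ±(e₁ + e₂ - e₃)`. Among the `8³` matrices with such
columns exactly four lie in the stabilizer and have determinant one: `1`, two involutions `w₁`, `w₂`
and their product. A group of order four in which every element squares to one is a Klein four
group. -/

lemma IsKleinFour.of_card_eq_four_of_sq_eq_one {G : Type*} [Group G] (hcard : Nat.card G = 4)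
    (hsq : ∀ g : G, g ^ 2 = 1) : IsKleinFour G where
  card_four := hcard
  exponent_two := by
    have : Finite G := Nat.finite_of_card_ne_zero (by omega)
    have : Nontrivial G := Finite.one_lt_card_iff_nontrivial.mp (by omega)
    have : Fact (Nat.Prime 2) := ⟨Nat.prime_two⟩
    exact (Monoid.exponent_eq_prime_iff Nat.prime_two).mpr fun g hg ↦ orderOf_eq_prime (hsq g) hg

instance : IsKleinFour (Multiplicative (ZMod 2) × Multiplicative (ZMod 2)) :=
  .of_card_eq_four_of_sq_eq_one (by simp) (by decide)

abbrev stabilizerM'N'P : Subgroup SL3 := congrStab B₁ ⊓ congrStab B₂ ⊓ congrStab B₃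

lemma mem_stabilizerM'N'P {g : SL3} :
    g ∈ stabilizerM'N'P ↔ (g : Matrix (Fin 3) (Fin 3) ℤ)ᵀ * B₁ * g = B₁ ∧
      (g : Matrix (Fin 3) (Fin 3) ℤ)ᵀ * B₂ * g = B₂ ∧ (g : Matrix (Fin 3) (Fin 3) ℤ)ᵀ * B₃ * g = B₃ :=
  and_assoc

def columnCandidates : Finset (Fin 3 → ℤ) :=
  {![1, 0, 0], ![-1, 0, 0], ![0, 1, 0], ![0, -1, 0], ![0, 0, 1], ![0, 0, -1],
    ![1, 1, -1], ![-1, -1, 1]}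

lemma mem_columnCandidates {v : Fin 3 → ℤ} (h₁ : v ⬝ᵥ B₁ *ᵥ v = 2) (h₂ : v ⬝ᵥ B₂ *ᵥ v = 4)
    (h₃ : v ⬝ᵥ B₃ *ᵥ v = 6) : v ∈ columnCandidates := by
  obtain ⟨a, b, c, rfl⟩ : ∃ a b c : ℤ, v = ![a, b, c] :=
    ⟨v 0, v 1, v 2, by ext i; fin_cases i <;> rfl⟩
  simp only [B₁, B₂, B₃, dotProduct, mulVec, Fin.sum_univ_three, of_apply, cons_val,
    cons_val_zero, cons_val_one] at h₁ h₂ h₃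
  have hsum : a ^ 2 + b ^ 2 + (a + c) ^ 2 + (b + c) ^ 2 = 2 := by linear_combination h₁
  obtain ⟨ha₀, ha₁⟩ : -1 ≤ a ∧ a ≤ 1 := by
    constructor <;> nlinarith [sq_nonneg b, sq_nonneg (a + c), sq_nonneg (b + c)]
  obtain ⟨hb₀, hb₁⟩ : -1 ≤ b ∧ b ≤ 1 := by
    constructor <;> nlinarith [sq_nonneg a, sq_nonneg (a + c), sq_nonneg (b + c)]
  obtain ⟨hc₀, hc₁⟩ : -2 ≤ c ∧ c ≤ 2 := by
    constructor <;> nlinarith [sq_nonneg a, sq_nonneg b, sq_nonneg (b + c)]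
  revert h₂ h₃
  interval_cases a <;> interval_cases b <;> interval_cases c <;> decide

lemma col_mem_columnCandidates {g : SL3} (hg : g ∈ stabilizerM'N'P) (j : Fin 3) :
    (g : Matrix (Fin 3) (Fin 3) ℤ)ᵀ j ∈ columnCandidates := by
  obtain ⟨h₁, h₂, h₃⟩ := mem_stabilizerM'N'P.mp hg
  refine mem_columnCandidates ?_ ?_ ?_ <;>
    · simp only [← mul_mul_apply, h₁, h₂, h₃]
      fin_cases j <;> rfl

def w₁ : SL3 := ⟨!![-1, 0, 0; -1, 0, -1; 1, -1, 0], by decide⟩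

def w₂ : SL3 := ⟨!![0, -1, -1; 0, -1, 0; -1, 1, 0], by decide⟩

lemma w₁_mem : w₁ ∈ stabilizerM'N'P :=
  mem_stabilizerM'N'P.mpr (by decide)

lemma w₂_mem : w₂ ∈ stabilizerM'N'P :=
  mem_stabilizerM'N'P.mpr (by decide)

lemma exists_eq_of_columns_mem_columnCandidates :
    ∀ c₀ ∈ columnCandidates, ∀ c₁ ∈ columnCandidates, ∀ c₂ ∈ columnCandidates,
      let M := (of ![c₀, c₁, c₂])ᵀ
      Mᵀ * B₁ * M = B₁ → Mᵀ * B₂ * M = B₂ → Mᵀ * B₃ * M = B₃ → M.det = 1 →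
      ∃ w ∈ ({1, w₁, w₂, w₁ * w₂} : Finset SL3), (w : Matrix (Fin 3) (Fin 3) ℤ) = M := by
  decide

lemma mem_stabilizerM'N'P_iff {g : SL3} :
    g ∈ stabilizerM'N'P ↔ g ∈ ({1, w₁, w₂, w₁ * w₂} : Finset SL3) := by
  constructor
  · intro hg
    have hcols : (of ![(g : Matrix (Fin 3) (Fin 3) ℤ)ᵀ 0, (g : Matrix (Fin 3) (Fin 3) ℤ)ᵀ 1,
        (g : Matrix (Fin 3) (Fin 3) ℤ)ᵀ 2])ᵀ = g := by
      ext i j; fin_cases j <;> rfl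
    obtain ⟨h₁, h₂, h₃⟩ := mem_stabilizerM'N'P.mp hg
    obtain ⟨w, hw, hwg⟩ := exists_eq_of_columns_mem_columnCandidates
      _ (col_mem_columnCandidates hg 0) _ (col_mem_columnCandidates hg 1)
      _ (col_mem_columnCandidates hg 2) (by rwa [hcols]) (by rwa [hcols]) (by rwa [hcols])
      (by rw [hcols]; exact g.2)
    rwa [← Subtype.ext (hwg.trans hcols)]
  · intro hg
    simp only [Finset.mem_insert, Finset.mem_singleton] at hg
    rcases hg with rfl | rfl | rfl | rfl
    exacts [one_mem _, w₁_mem, w₂_mem, mul_mem w₁_mem w₂_mem]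

instance : IsKleinFour stabilizerM'N'P := by
  refine .of_card_eq_four_of_sq_eq_one ?_ fun g ↦ Subtype.ext ?_
  · rw [Nat.card_congr (Equiv.subtypeEquivRight fun _ ↦ mem_stabilizerM'N'P_iff),
      Nat.card_eq_fintype_card, Fintype.card_coe]
    decide
  · have hsq : ∀ w ∈ ({1, w₁, w₂, w₁ * w₂} : Finset SL3), w ^ 2 = 1 := by decide
    exact hsq g (mem_stabilizerM'N'P_iff.mp g.2)

/-- The subgroup `{g ∈ SL(3, ℤ) : gᵀ B₁ g = B₁, gᵀ B₂ g = B₂, gᵀ B₃ g = B₃}` (the stabilizer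
of the 2-cell `t₃ = M′N′P`) is isomorphic to the Klein four group `C₂ × C₂`; it has order 4. -/
theorem stabilizer_of_cell_M'N'P :
    Nonempty (↥(congrStab B₁ ⊓ congrStab B₂ ⊓ congrStab B₃) ≃*
      Multiplicative (ZMod 2) × Multiplicative (ZMod 2)) ∧
    Nat.card (congrStab B₁ ⊓ congrStab B₂ ⊓ congrStab B₃ : Subgroup SL3) = 4 :=
  ⟨IsKleinFour.nonempty_mulEquiv, IsKleinFour.card_four⟩
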